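/- Let X = {p} ∪ ω^{<ω₁} with the topology where tree elements are isolated and neighbourhoods of p are complements of finite unions of branches. Then Bob has a winning strategy in the short game G_2(Ω_p, Ω_p) of length ω where Bob may pick up to two points per inning: he can ensure that after n innings his chosen points include an n-element set no two elements of which lie on a common branch, and hence at the end his set is not covered by finitely many branches, so p is in its closure. -/
import Mathlib


open Topology Set

/-- The tree `ω^{<ω₁}`: sequences of natural numbers of countable ordinal length. -/
def TSeq : Type 1 :=
  Σ ξ : {o : Ordinal.{0} // o < (Cardinal.aleph 1).ord}, ∀ α : Ordinal.{0}, α < ξ.1 → ℕ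

/-- The extension (tree) order on `TSeq`: `s ⊑ t` iff `t` extends `s`. -/
def TSeq.le (s t : TSeq) : Prop :=
  ∃ h : s.1.1 ≤ t.1.1, ∀ α hα, s.2 α hα = t.2 α (lt_of_lt_of_le hα h)

/-- A branch of the tree `ω^{<ω₁}`: a maximal chain with respect to the extension order. -/
def IsBranch (c : Set TSeq) : Prop :=
  IsChain TSeq.le c ∧ ∀ c', IsChain TSeq.le c' → c ⊆ c' → c = c'

/-- The space `X = {p} ∪ ω^{<ω₁}` (`p = none`): tree elements are isolated, and a set
containing `p` is open iff its complement is covered by finitely many branches. -/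
instance : TopologicalSpace (Option TSeq) where
  IsOpen U := none ∈ U → ∃ F : Set (Set TSeq), F.Finite ∧ (∀ b ∈ F, IsBranch b) ∧
    {t : TSeq | some t ∉ U} ⊆ ⋃₀ F
  isOpen_univ := by
    intro _
    exact ⟨∅, Set.finite_empty, by simp, by simp⟩
  isOpen_inter := by
    intro U V hU hV h
    obtain ⟨F₁, hF₁, hb₁, hs₁⟩ := hU h.1
    obtain ⟨F₂, hF₂, hb₂, hs₂⟩ := hV h.2
    refine ⟨F₁ ∪ F₂, hF₁.union hF₂, ?_, ?_⟩
    · rintro b (hb | hb)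
      exacts [hb₁ b hb, hb₂ b hb]
    · intro t ht
      simp only [Set.mem_setOf_eq, Set.mem_inter_iff, not_and_or] at ht
      rcases ht with ht | ht
      · exact Set.sUnion_mono Set.subset_union_left (hs₁ ht)
      · exact Set.sUnion_mono Set.subset_union_right (hs₂ ht)
  isOpen_sUnion := by
    intro S hS h
    obtain ⟨s, hs, hns⟩ := h
    obtain ⟨F, hF, hb, hsub⟩ := hS s hs hns
    refine ⟨F, hF, hb, fun t ht => hsub fun hts => ht ⟨s, hs, hts⟩⟩

/-- A strategy for Bob in the game `G_2(Ω_p, Ω_p)` of length `ω`: at inning `n`, given the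
history of Alice's moves and her current set `A` (with `p ∈ closure A`), Bob picks at most
two points of `A`. -/
structure BobStratTwo (X : Type 1) [TopologicalSpace X] (p : X) where
  move : ∀ n : ℕ, (Fin n → Set X) → Set X → Finset X
  card_le : ∀ n hist A, (move n hist A).card ≤ 2
  subset : ∀ n hist A, p ∈ closure A → ↑(move n hist A) ⊆ A

/-- The strategy is winning: for every play by Alice of sets having `p` in their closure,
the union of Bob's chosen pairs has `p` in its closure. -/
def BobStratTwo.Winning {X : Type 1} [TopologicalSpace X] {p : X} (S : BobStratTwo X p) :
    Prop :=
  ∀ f : ℕ → Set X, (∀ n, p ∈ closure (f n)) →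
    p ∈ closure (⋃ n, (↑(S.move n (fun m : Fin n => f m) (f n)) : Set X))

namespace BobTree

open scoped Classical

/-- A set of tree elements is coverable by finitely many branches. -/
def Cov (s : Set TSeq) : Prop :=
  ∃ F : Set (Set TSeq), F.Finite ∧ (∀ b ∈ F, IsBranch b) ∧ s ⊆ ⋃₀ F

/-- The tree part of a subset of `Option TSeq`. -/
def tp (A : Set (Option TSeq)) : Set TSeq := {t | some t ∈ A}

lemma le_refl' (s : TSeq) : TSeq.le s s := ⟨le_rfl, fun _ _ => rfl⟩

lemma le_trans' {s t u : TSeq} (h1 : TSeq.le s t) (h2 : TSeq.le t u) : TSeq.le s u := by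
  obtain ⟨ho1, hv1⟩ := h1; obtain ⟨ho2, hv2⟩ := h2
  exact ⟨ho1.trans ho2, fun α hα => (hv1 α hα).trans (hv2 α (lt_of_lt_of_le hα ho1))⟩

lemma comparable_of_le {a b c : TSeq} (ha : TSeq.le a c) (hb : TSeq.le b c) :
    TSeq.le a b ∨ TSeq.le b a := by
  obtain ⟨hao, hav⟩ := ha; obtain ⟨hbo, hbv⟩ := hb
  rcases le_total a.1.1 b.1.1 with h | h
  · exact Or.inl ⟨h, fun α hα => (hav α hα).trans (hbv α (lt_of_lt_of_le hα h)).symm⟩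
  · exact Or.inr ⟨h, fun α hα => (hbv α hα).trans (hav α (lt_of_lt_of_le hα h)).symm⟩

lemma Cov.mono {s t : Set TSeq} (h : s ⊆ t) (ht : Cov t) : Cov s := by
  obtain ⟨F, hF, hb, hsub⟩ := ht
  exact ⟨F, hF, hb, h.trans hsub⟩

lemma Cov.union {s t : Set TSeq} (hs : Cov s) (ht : Cov t) : Cov (s ∪ t) := by
  obtain ⟨F₁, hF₁, hb₁, hs₁⟩ := hs
  obtain ⟨F₂, hF₂, hb₂, hs₂⟩ := ht
  refine ⟨F₁ ∪ F₂, hF₁.union hF₂, ?_, ?_⟩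
  · rintro b (hb | hb)
    exacts [hb₁ b hb, hb₂ b hb]
  · exact Set.union_subset (hs₁.trans (Set.sUnion_mono Set.subset_union_left))
      (hs₂.trans (Set.sUnion_mono Set.subset_union_right))

lemma cov_empty : Cov (∅ : Set TSeq) := ⟨∅, Set.finite_empty, by simp, by simp⟩

lemma cov_chain {c : Set TSeq} (hc : IsChain TSeq.le c) : Cov c := by
  obtain ⟨M, hM, hsub⟩ := hc.exists_maxChain
  refine ⟨{M}, Set.finite_singleton M, ?_, ?_⟩
  · intro b hb
    rw [Set.mem_singleton_iff] at hb
    subst hb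
    exact ⟨hM.1, fun c' h1 h2 => hM.2 h1 h2⟩
  · rw [Set.sUnion_singleton]
    exact hsub

lemma cov_biUnion {ι : Type*} (D : Finset ι) (g : ι → Set TSeq)
    (h : ∀ d ∈ D, Cov (g d)) : Cov (⋃ d ∈ D, g d) := by
  classical
  induction D using Finset.induction with
  | empty => simpa using cov_empty
  | @insert a s ha ih =>
    rw [Finset.set_biUnion_insert]
    exact (h a (Finset.mem_insert_self a s)).union
      (ih (fun d hd => h d (Finset.mem_insert_of_mem hd)))

lemma exists_incomp {A : Set TSeq} (hA : ¬ Cov A) :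
    ∃ x ∈ A, ∃ y ∈ A, x ≠ y ∧ ¬ TSeq.le x y ∧ ¬ TSeq.le y x := by
  by_contra h
  push_neg at h
  apply hA
  apply cov_chain
  intro x hx y hy hxy
  by_cases hle : TSeq.le x y
  · exact Or.inl hle
  · exact Or.inr (h x hx y hy hxy hle)

/-- A finite antichain. -/
def Antich (E : Finset TSeq) : Prop :=
  ∀ a ∈ E, ∀ b ∈ E, a ≠ b → ¬ TSeq.le a b

lemma antich_insert2 {x y : TSeq} {D : Finset TSeq} (hD : Antich D)
    (hxy : ¬ TSeq.le x y) (hyx : ¬ TSeq.le y x)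
    (hx : ∀ d ∈ D, ¬ TSeq.le x d ∧ ¬ TSeq.le d x)
    (hy : ∀ d ∈ D, ¬ TSeq.le y d ∧ ¬ TSeq.le d y) :
    Antich (insert x (insert y D)) := by
  intro a ha b hb hab
  simp only [Finset.mem_insert] at ha hb
  rcases ha with rfl | rfl | ha <;> rcases hb with rfl | rfl | hb
  · exact absurd rfl hab
  · exact hxy
  · exact (hx b hb).1
  · exact hyx
  · exact absurd rfl hab
  · exact (hy b hb).1
  · exact (hx a ha).2
  · exact (hy a ha).2
  · exact hD a ha b hb hab

/-- The data of one step: two points of `A` and the new antichain. -/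
def StepP (D : Finset TSeq) (A : Set TSeq) (z : TSeq × TSeq × Finset TSeq) : Prop :=
  z.1 ∈ A ∧ z.2.1 ∈ A ∧
    (↑z.2.2 : Set TSeq) ⊆ insert z.1 (insert z.2.1 (↑D : Set TSeq)) ∧
    Antich z.2.2 ∧ D.card + 1 ≤ z.2.2.card

lemma step (D : Finset TSeq) (hD : Antich D) (A : Set TSeq) (hA : ¬ Cov A) :
    ∃ z, StepP D A z := by
  classical
  by_cases h0 : Cov {x ∈ A | ∀ d ∈ D, ¬ TSeq.le x d ∧ ¬ TSeq.le d x}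
  · -- some `d ∈ D` has a non-coverable set of extensions inside `A`
    have hex : ∃ d ∈ D, ¬ Cov {x ∈ A | TSeq.le d x} := by
      by_contra hall
      push_neg at hall
      apply hA
      apply Cov.mono (t := {x ∈ A | ∀ d ∈ D, ¬ TSeq.le x d ∧ ¬ TSeq.le d x} ∪
        ⋃ d ∈ D, ({x ∈ A | TSeq.le d x} ∪ {x ∈ A | TSeq.le x d}))
      · intro x hx
        by_cases hx0 : ∀ d ∈ D, ¬ TSeq.le x d ∧ ¬ TSeq.le d x
        · exact Or.inl ⟨hx, hx0⟩
        · push_neg at hx0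
          obtain ⟨d, hd, hcase⟩ := hx0
          refine Or.inr (Set.mem_iUnion₂.2 ⟨d, hd, ?_⟩)
          by_cases h : TSeq.le x d
          · exact Or.inr ⟨hx, h⟩
          · exact Or.inl ⟨hx, hcase h⟩
      · refine h0.union (cov_biUnion D _ (fun d hd => (hall d hd).union (cov_chain ?_)))
        intro a ha b hb hne
        exact comparable_of_le ha.2 hb.2
    obtain ⟨d, hd, hdcov⟩ := hex
    obtain ⟨x, hx, y, hy, hxy, hl1, hl2⟩ := exists_incomp hdcov
    have key : ∀ u, TSeq.le d u → ∀ d' ∈ D.erase d, ¬ TSeq.le u d' ∧ ¬ TSeq.le d' u := by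
      intro u hu d' hd'
      have hne : d' ≠ d := Finset.ne_of_mem_erase hd'
      have hd'D : d' ∈ D := Finset.mem_of_mem_erase hd'
      constructor
      · intro h
        exact hD d hd d' hd'D hne.symm (le_trans' hu h)
      · intro h
        rcases comparable_of_le h hu with h1 | h1
        · exact hD d' hd'D d hd hne h1
        · exact hD d hd d' hd'D hne.symm h1
    refine ⟨(x, y, insert x (insert y (D.erase d))), hx.1, hy.1, ?_, ?_, ?_⟩
    · simp only [Finset.coe_insert]
      exact Set.insert_subset_insert (Set.insert_subset_insert
        (Finset.coe_subset.2 (Finset.erase_subset d D)))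
    · exact antich_insert2
        (fun a ha b hb hab => hD a (Finset.mem_of_mem_erase ha) b (Finset.mem_of_mem_erase hb) hab)
        hl1 hl2 (key x hx.2) (key y hy.2)
    · have hxny : x ∉ insert y (D.erase d) := by
        simp only [Finset.mem_insert]
        push_neg
        exact ⟨hxy, fun hmem => (key x hx.2 x hmem).1 (le_refl' x)⟩
      have hyn : y ∉ D.erase d := fun hmem => (key y hy.2 y hmem).1 (le_refl' y)
      rw [Finset.card_insert_of_notMem hxny, Finset.card_insert_of_notMem hyn,
        Finset.card_erase_of_mem hd]
      have : 1 ≤ D.card := Finset.card_pos.2 ⟨d, hd⟩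
      omega
  · obtain ⟨x, hx, y, hy, hxy, hl1, hl2⟩ := exists_incomp h0
    obtain ⟨hxA, hxD⟩ := hx
    obtain ⟨hyA, hyD⟩ := hy
    refine ⟨(x, y, insert x (insert y D)), hxA, hyA, ?_, antich_insert2 hD hl1 hl2 hxD hyD, ?_⟩
    · simp only [Finset.coe_insert]
      exact subset_rfl
    · have hxny : x ∉ insert y D := by
        simp only [Finset.mem_insert]
        push_neg
        exact ⟨hxy, fun hmem => (hxD x hmem).1 (le_refl' x)⟩
      have hyn : y ∉ D := fun hmem => (hyD y hmem).1 (le_refl' y)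
      rw [Finset.card_insert_of_notMem hxny, Finset.card_insert_of_notMem hyn]
      omega

/-- Bob's move together with the new antichain, from the current antichain and Alice's set. -/
noncomputable def moveD (D : Finset TSeq) (A : Set (Option TSeq)) :
    Finset (Option TSeq) × Finset TSeq :=
  if none ∈ A then ({none}, D)
  else if h : ∃ z, StepP D (tp A) z then
    ({some h.choose.1, some h.choose.2.1}, h.choose.2.2)
  else (∅, D)

/-- The antichain Bob maintains, reconstructed from the history. -/
noncomputable def state : (n : ℕ) → (Fin n → Set (Option TSeq)) → Finset TSeq
  | 0, _ => ∅
  | n + 1, hist => (moveD (state n (fun m => hist m.castSucc)) (hist (Fin.last n))).2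

lemma moveD_none {D : Finset TSeq} {A : Set (Option TSeq)} (h : none ∈ A) :
    moveD D A = ({none}, D) := by
  unfold moveD
  rw [if_pos h]

lemma moveD_of_step {D : Finset TSeq} {A : Set (Option TSeq)} (h1 : none ∉ A)
    (h2 : ∃ z, StepP D (tp A) z) :
    moveD D A = ({some h2.choose.1, some h2.choose.2.1}, h2.choose.2.2) := by
  unfold moveD
  rw [if_neg h1, dif_pos h2]

lemma moveD_else {D : Finset TSeq} {A : Set (Option TSeq)} (h1 : none ∉ A)
    (h2 : ¬ ∃ z, StepP D (tp A) z) : moveD D A = (∅, D) := by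
  unfold moveD
  rw [if_neg h1, dif_neg h2]

lemma moveD_snd_antich (D : Finset TSeq) (A : Set (Option TSeq)) (hD : Antich D) :
    Antich (moveD D A).2 := by
  by_cases h1 : none ∈ A
  · rw [moveD_none h1]; exact hD
  by_cases h2 : ∃ z, StepP D (tp A) z
  · rw [moveD_of_step h1 h2]
    exact h2.choose_spec.2.2.2.1
  · rw [moveD_else h1 h2]; exact hD

lemma state_antich : ∀ n hist, Antich (state n hist) := by
  intro n
  induction n with
  | zero => intro hist a ha; simp [state] at ha
  | succ n ih =>
    intro hist
    exact moveD_snd_antich _ _ (ih _)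

/-- The closure criterion for `p = none`. -/
lemma mem_closure_iff' (A : Set (Option TSeq)) :
    none ∈ closure A ↔ (none ∈ A ∨ ¬ Cov (tp A)) := by
  rw [mem_closure_iff]
  constructor
  · intro h
    by_contra hc
    push_neg at hc
    obtain ⟨hnA, hcov⟩ := hc
    obtain ⟨F, hF, hb, hsub⟩ := hcov
    set U : Set (Option TSeq) := {x | x = none ∨ ∃ t, x = some t ∧ t ∉ ⋃₀ F} with hU
    have hUopen : IsOpen U := by
      intro _
      refine ⟨F, hF, hb, ?_⟩
      intro t ht
      by_contra htF
      exact ht (Or.inr ⟨t, rfl, htF⟩)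
    obtain ⟨x, hxU, hxA⟩ := h U hUopen (Or.inl rfl)
    rcases hxU with rfl | ⟨t, rfl, htF⟩
    · exact hnA hxA
    · exact htF (hsub hxA)
  · intro h U hU hnU
    rcases h with h | h
    · exact ⟨none, hnU, h⟩
    · obtain ⟨F, hF, hb, hsub⟩ := hU hnU
      by_contra hne
      apply h
      refine ⟨F, hF, hb, ?_⟩
      intro t ht
      exact hsub fun hU' => hne ⟨some t, hU', ht⟩

end BobTree

open BobTree in
/-- On `X = {p} ∪ ω^{<ω₁}` with the branch topology, Bob has a winning strategy in the short
game `G_2(Ω_p, Ω_p)` where he may pick up to two points per inning. -/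
theorem bob_winning_two_tree : ∃ S : BobStratTwo (Option TSeq) none, S.Winning := by
  classical
  refine ⟨⟨fun n hist A => (moveD (state n hist) A).1, ?_, ?_⟩, ?_⟩
  · -- at most two points
    intro n hist A
    show (moveD (state n hist) A).1.card ≤ 2
    by_cases h1 : none ∈ A
    · rw [moveD_none h1]; simp
    by_cases h2 : ∃ z, StepP (state n hist) (tp A) z
    · rw [moveD_of_step h1 h2]
      exact (Finset.card_insert_le _ _).trans (by simp)
    · rw [moveD_else h1 h2]; simp
  · -- the points belong to Alice's set
    intro n hist A hcl
    rw [mem_closure_iff'] at hcl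
    show ↑(moveD (state n hist) A).1 ⊆ A
    by_cases h1 : none ∈ A
    · rw [moveD_none h1]
      intro a ha
      simp only [Finset.coe_singleton, Set.mem_singleton_iff] at ha
      subst ha
      exact h1
    by_cases h2 : ∃ z, StepP (state n hist) (tp A) z
    · rw [moveD_of_step h1 h2]
      intro a ha
      have hspec := h2.choose_spec
      simp only [Finset.coe_insert, Finset.coe_singleton, Set.mem_insert_iff,
        Set.mem_singleton_iff] at ha
      rcases ha with rfl | rfl
      · exact hspec.1
      · exact hspec.2.1
    · rcases hcl with h | h
      · exact absurd h h1
      · exact absurd (step _ (state_antich n hist) _ h) h2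
  · -- winning
    intro f hf
    rw [mem_closure_iff']
    by_cases hnone : ∃ n, none ∈ f n
    · left
      obtain ⟨n, hn⟩ := hnone
      refine Set.mem_iUnion.2 ⟨n, ?_⟩
      show none ∈ ↑(moveD (state n fun m : Fin n => f ↑m) (f n)).1
      rw [moveD_none hn]
      simp
    · right
      push_neg at hnone
      have hcov : ∀ n, ¬ Cov (tp (f n)) := fun n =>
        ((mem_closure_iff' (f n)).1 (hf n)).resolve_left (hnone n)
      set Dn : ℕ → Finset TSeq := fun n => state n (fun m : Fin n => f ↑m) with hDn
      have hstate : ∀ n, Dn (n + 1) = (moveD (Dn n) (f n)).2 := fun n => rfl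
      have hAn : ∀ n, Antich (Dn n) := fun n => state_antich n _
      have hstep : ∀ n, ∃ z, StepP (Dn n) (tp (f n)) z := fun n =>
        step _ (hAn n) _ (hcov n)
      -- the cardinality grows
      have hcard : ∀ n, n ≤ (Dn n).card := by
        intro n
        induction n with
        | zero => simp
        | succ n ih =>
          rw [hstate n, moveD_of_step (hnone n) (hstep n)]
          have := (hstep n).choose_spec.2.2.2.2
          dsimp only
          omega
      -- the antichain is contained in the tree part of Bob's choices
      set U : Set (Option TSeq) :=
        ⋃ n, ↑(moveD (state n fun m : Fin n => f ↑m) (f n)).1 with hUdef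
      have hsubU : ∀ n, (↑(Dn n) : Set TSeq) ⊆ tp U := by
        intro n
        induction n with
        | zero => simp [hDn, state]
        | succ n ih =>
          rw [hstate n]
          have heq2 : (moveD (Dn n) (f n)).2 = (hstep n).choose.2.2 := by
            rw [moveD_of_step (hnone n) (hstep n)]
          have heq1 : (moveD (Dn n) (f n)).1 =
              {some (hstep n).choose.1, some (hstep n).choose.2.1} := by
            rw [moveD_of_step (hnone n) (hstep n)]
          rw [heq2]
          intro a ha
          have hmem := (hstep n).choose_spec.2.2.1 ha
          have haux : ∀ t : TSeq, some t ∈ (moveD (Dn n) (f n)).1 → a = t → a ∈ tp U := by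
            intro t hmemt hat
            subst hat
            exact Set.mem_iUnion.2 ⟨n, hmemt⟩
          rcases hmem with rfl | hmem
          · exact haux _ (by rw [heq1]; simp) rfl
          rcases hmem with rfl | hmem
          · exact haux _ (by rw [heq1]; simp) rfl
          · exact ih hmem
      -- conclude: tp U is not finitely coverable
      rintro ⟨F, hF, hb, hsub⟩
      set k := hF.toFinset.card with hk
      have hE : (↑(Dn (k + 1)) : Set TSeq) ⊆ ⋃₀ F := (hsubU (k + 1)).trans hsub
      -- map each element to a branch containing it
      set φ : TSeq → Set TSeq := fun e =>
        if h : ∃ b ∈ hF.toFinset, e ∈ b then h.choose else ∅ with hφ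
      have hmaps : ∀ e ∈ Dn (k + 1), φ e ∈ hF.toFinset := by
        intro e he
        obtain ⟨b, hbF, hbe⟩ := hE he
        have hex : ∃ b ∈ hF.toFinset, e ∈ b := ⟨b, hF.mem_toFinset.2 hbF, hbe⟩
        simp only [hφ, dif_pos hex]
        exact hex.choose_spec.1
      have hmemφ : ∀ e ∈ Dn (k + 1), e ∈ φ e := by
        intro e he
        obtain ⟨b, hbF, hbe⟩ := hE he
        have hex : ∃ b ∈ hF.toFinset, e ∈ b := ⟨b, hF.mem_toFinset.2 hbF, hbe⟩
        simp only [hφ, dif_pos hex]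
        exact hex.choose_spec.2
      have hinj : Set.InjOn φ ↑(Dn (k + 1)) := by
        intro e1 he1 e2 he2 hφeq
        by_contra hne
        have hb1 : IsBranch (φ e1) := hb _ (hF.mem_toFinset.1 (hmaps e1 he1))
        have h1 : e1 ∈ φ e1 := hmemφ e1 he1
        have h2 : e2 ∈ φ e1 := hφeq ▸ hmemφ e2 he2
        rcases hb1.1 h1 h2 hne with h | h
        · exact hAn (k + 1) e1 he1 e2 he2 hne h
        · exact hAn (k + 1) e2 he2 e1 he1 (Ne.symm hne) h
      have hle : (Dn (k + 1)).card ≤ k :=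
        Finset.card_le_card_of_injOn φ hmaps hinj
      have := hcard (k + 1)
      omega
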